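/- arXiv:1904.01926 — 3 statements merged into one kernel-verified Lean document; each statement's English description precedes it below -/
import Mathlib

section
/- Let Φ have full column rank with pseudoinverse Φ†, E a perturbation with Δ = EᵀΦ + ΦᵀE + EᵀE satisfying ‖Φ†ᵀΔΦ†‖₂ < 1, and let Φ̃ = Φ + E. Then Φ̃† = Φ† + (ΦᵀΦ)^{-1}Eᵀ + S_Φ Φᵀ + S_Φ Eᵀ, where S_Φ = Φ†[Σ_{k≥1}(-1)^k(Φ†ᵀΔΦ†)^k]Φ†ᵀ. -/
open Matrix
open scoped Matrix.Norms.L2Operator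

/-!
`ΦᵀΦ` is positive definite, hence invertible, and `Φ̃ᵀΦ̃ = ΦᵀΦ + Δ`. With `Φ† = (ΦᵀΦ)⁻¹Φᵀ`,
`T = Φ†ᵀΔΦ†` and `N = ∑_{k≥1} (-T)ᵏ`, the Neumann series gives `N (1 + T) = -T`. Since
`Φ†Φ = 1`, `Φ†Φ†ᵀ = (ΦᵀΦ)⁻¹` and `TΦ = Φ†ᵀΔ`, this identity alone makes `(ΦᵀΦ)⁻¹ + Φ† N Φ†ᵀ`
a left inverse of `ΦᵀΦ + Δ`; multiplying it by `Φ̃ᵀ = Φᵀ + Eᵀ` gives the expansion.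
-/

theorem Matrix.isUnit_transpose_mul_self_of_injective {m n : Type*} [Fintype m] [Fintype n]
    [DecidableEq n] (Φ : Matrix m n ℝ) (hΦ : Function.Injective Φ.mulVec) :
    IsUnit (Φᵀ * Φ) := by
  simpa using (PosDef.conjTranspose_mul_self Φ hΦ).isUnit

theorem tsum_neg_pow_succ_mul_one_add {R : Type*} [NormedRing R] [HasSummableGeomSeries R]
    {x : R} (hx : ‖x‖ < 1) : (∑' k : ℕ, (-x) ^ (k + 1)) * (1 + x) = -x := by
  have hx' : ‖-x‖ < 1 := by rwa [norm_neg]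
  have hgeom : (∑' k : ℕ, (-x) ^ k) * (1 + x) = 1 := by
    simpa only [sub_neg_eq_add] using geom_series_mul_neg (-x) hx'
  rw [geom_series_succ (-x) hx', sub_mul, hgeom, one_mul]
  abel

namespace Matrix

variable {R : Type*} [CommRing R] {m n : Type*} [Fintype m] [Fintype n] [DecidableEq n]

noncomputable def leftPinv (Φ : Matrix m n R) : Matrix n m R := (Φᵀ * Φ)⁻¹ * Φᵀ

theorem transpose_leftPinv (Φ : Matrix m n R) : (leftPinv Φ)ᵀ = Φ * (Φᵀ * Φ)⁻¹ := by
  rw [leftPinv, transpose_mul, transpose_transpose, transpose_nonsing_inv, transpose_mul,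
    transpose_transpose]

variable {Φ : Matrix m n R}

theorem leftPinv_mul_self (hΦ : IsUnit (Φᵀ * Φ)) : leftPinv Φ * Φ = 1 := by
  rw [leftPinv, Matrix.mul_assoc, nonsing_inv_mul _ ((isUnit_iff_isUnit_det _).mp hΦ)]

theorem leftPinv_mul_transpose_leftPinv (hΦ : IsUnit (Φᵀ * Φ)) :
    leftPinv Φ * (leftPinv Φ)ᵀ = (Φᵀ * Φ)⁻¹ := by
  rw [transpose_leftPinv, ← Matrix.mul_assoc, leftPinv_mul_self hΦ, Matrix.one_mul]

theorem transpose_leftPinv_mul_transpose_mul_self (hΦ : IsUnit (Φᵀ * Φ)) :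
    (leftPinv Φ)ᵀ * (Φᵀ * Φ) = Φ := by
  rw [transpose_leftPinv, Matrix.mul_assoc,
    nonsing_inv_mul _ ((isUnit_iff_isUnit_det _).mp hΦ), Matrix.mul_one]

theorem inv_transpose_mul_self_add_eq [DecidableEq m] (hΦ : IsUnit (Φᵀ * Φ))
    {Δ : Matrix n n R} {N : Matrix m m R}
    (hN : N * (1 + (leftPinv Φ)ᵀ * Δ * leftPinv Φ) = -((leftPinv Φ)ᵀ * Δ * leftPinv Φ)) :
    (Φᵀ * Φ + Δ)⁻¹ = (Φᵀ * Φ)⁻¹ + leftPinv Φ * N * (leftPinv Φ)ᵀ := by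
  set P := leftPinv Φ
  set G := (Φᵀ * Φ)⁻¹
  have hGA : G * (Φᵀ * Φ) = 1 := nonsing_inv_mul _ ((isUnit_iff_isUnit_det _).mp hΦ)
  have hPΦ : P * Φ = 1 := leftPinv_mul_self hΦ
  have hTΦ : (Pᵀ * Δ * P) * Φ = Pᵀ * Δ := by rw [Matrix.mul_assoc, hPΦ, Matrix.mul_one]
  have hS : P * N * Pᵀ * (Φᵀ * Φ + Δ) = -(G * Δ) := calc
    P * N * Pᵀ * (Φᵀ * Φ + Δ) = P * (N * (1 + Pᵀ * Δ * P)) * Φ := by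
      rw [Matrix.mul_add, Matrix.mul_assoc _ Pᵀ, transpose_leftPinv_mul_transpose_mul_self hΦ]
      simp only [Matrix.mul_add, Matrix.add_mul, Matrix.mul_one, Matrix.mul_assoc, hPΦ]
    _ = -(G * Δ) := by
      rw [hN, Matrix.mul_neg, Matrix.neg_mul, Matrix.mul_assoc, hTΦ, ← Matrix.mul_assoc,
        leftPinv_mul_transpose_leftPinv hΦ]
  refine inv_eq_left_inv ?_
  rw [Matrix.add_mul, hS, Matrix.mul_add, hGA]
  abel

end Matrix

theorem pinv_perturbation_expansion_general (M K : ℕ)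
    (Φ E : Matrix (Fin M) (Fin K) ℝ)
    (hrank : Function.Injective Φ.mulVec)
    (pinv : Matrix (Fin K) (Fin M) ℝ) (hpinv : pinv = (Φᵀ * Φ)⁻¹ * Φᵀ)
    (Δ : Matrix (Fin K) (Fin K) ℝ) (hΔ : Δ = Eᵀ * Φ + Φᵀ * E + Eᵀ * E)
    (hsmall : ‖pinvᵀ * Δ * pinv‖ < 1)
    (SΦ : Matrix (Fin K) (Fin K) ℝ)
    (hS : SΦ = pinv * (∑' k : ℕ, ((-1 : ℝ) ^ (k + 1)) • (pinvᵀ * Δ * pinv) ^ (k + 1)) * pinvᵀ) :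
    ((Φ + E)ᵀ * (Φ + E))⁻¹ * (Φ + E)ᵀ = pinv + (Φᵀ * Φ)⁻¹ * Eᵀ + SΦ * Φᵀ + SΦ * Eᵀ := by
  obtain rfl : pinv = leftPinv Φ := hpinv
  have hgram : (Φ + E)ᵀ * (Φ + E) = Φᵀ * Φ + Δ := by
    rw [hΔ, transpose_add, Matrix.add_mul, Matrix.mul_add, Matrix.mul_add]
    abel
  have hseries : ∑' k : ℕ, ((-1 : ℝ) ^ (k + 1)) • ((leftPinv Φ)ᵀ * Δ * leftPinv Φ) ^ (k + 1) =
      ∑' k : ℕ, (-((leftPinv Φ)ᵀ * Δ * leftPinv Φ)) ^ (k + 1) := by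
    simp only [← smul_pow, neg_one_smul]
  rw [hgram, inv_transpose_mul_self_add_eq (isUnit_transpose_mul_self_of_injective Φ hrank)
    (tsum_neg_pow_succ_mul_one_add hsmall), ← hseries, ← hS, leftPinv, transpose_add]
  simp only [Matrix.mul_add, Matrix.add_mul]
  abel

/-- Expansion of the perturbed pseudoinverse:
`Φ̃† = Φ† + (ΦᵀΦ)⁻¹Eᵀ + S_Φ Φᵀ + S_Φ Eᵀ` where `S_Φ` is the Neumann-series remainder. -/
theorem pinv_perturbation_expansion (M K : ℕ)
    (Φ E : Matrix (Fin M) (Fin K) ℝ)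
    (hrank : Function.Injective Φ.mulVec)
    (hrank' : Function.Injective (Φ + E).mulVec)
    (pinv : Matrix (Fin K) (Fin M) ℝ) (hpinv : pinv = (Φᵀ * Φ)⁻¹ * Φᵀ)
    (Δ : Matrix (Fin K) (Fin K) ℝ) (hΔ : Δ = Eᵀ * Φ + Φᵀ * E + Eᵀ * E)
    (hsmall : ‖pinvᵀ * Δ * pinv‖ < 1)
    (SΦ : Matrix (Fin K) (Fin K) ℝ)
    (hS : SΦ = pinv * (∑' k : ℕ, ((-1 : ℝ) ^ (k + 1)) • (pinvᵀ * Δ * pinv) ^ (k + 1)) * pinvᵀ) :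
    ((Φ + E)ᵀ * (Φ + E))⁻¹ * (Φ + E)ᵀ = pinv + (Φᵀ * Φ)⁻¹ * Eᵀ + SΦ * Φᵀ + SΦ * Eᵀ :=
  pinv_perturbation_expansion_general M K Φ E hrank pinv hpinv Δ hΔ hsmall SΦ hS
end

section
/- Under the assumptions of the previous expansion, with D = 2‖E‖₂‖Φ‖₂ + ‖E‖₂² and D‖Φ†‖₂² < 1, the perturbation F of the pseudoinverse satisfies ‖F‖₂ ≤ ‖E‖₂‖Φ†‖₂² + (D‖Φ†‖₂⁴/(1 − D‖Φ†‖₂²))·(‖Φ‖₂ + ‖E‖₂). -/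
open Matrix
open scoped Matrix.Norms.L2Operator

/-!
Write `A = ΦᵀΦ` and `B = (Φ + E)ᵀ(Φ + E)`, so that `Fᵀ = A⁻¹Eᵀ + (B⁻¹ - A⁻¹)(Φ + E)ᵀ`.
The identity `B⁻¹ - A⁻¹ = -A⁻¹(B - A)B⁻¹` bounds `‖B⁻¹ - A⁻¹‖` by `‖A⁻¹‖‖B - A‖` times
`‖A⁻¹‖ + ‖B⁻¹ - A⁻¹‖`; solving for `‖B⁻¹ - A⁻¹‖` gives the Neumann-series bound, with
`‖B - A‖ ≤ D` and `‖A⁻¹‖ = ‖Φ†‖²`, the latter because `A⁻¹ = Φ†Φ†ᵀ` and the spectral norm is a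
C⋆-norm.
-/

theorem norm_inv_sub_inv_le_of_mul_eq_one {R : Type*} [NormedRing R] {a a' b b' : R} {α δ : ℝ}
    (ha : a' * a = 1) (hb : b * b' = 1) (hα : ‖a'‖ ≤ α) (hδ : ‖b - a‖ ≤ δ)
    (hαδ : α * δ < 1) :
    ‖b' - a'‖ ≤ α ^ 2 * δ / (1 - α * δ) := by
  have hS : b' - a' = -(a' * (b - a) * b') := by
    rw [mul_sub, sub_mul, mul_assoc a' b, hb, ha, mul_one, one_mul, neg_sub]
  have hb' : ‖b'‖ ≤ α + ‖b' - a'‖ :=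
    calc ‖b'‖ = ‖a' + (b' - a')‖ := by rw [add_sub_cancel]
      _ ≤ α + ‖b' - a'‖ := (norm_add_le _ _).trans (by gcongr)
  have hrec : ‖b' - a'‖ ≤ α * δ * (α + ‖b' - a'‖) :=
    calc ‖b' - a'‖ = ‖a' * (b - a) * b'‖ := by rw [hS, norm_neg]
      _ ≤ ‖a'‖ * ‖b - a‖ * ‖b'‖ := norm_mul₃_le
      _ ≤ α * δ * (α + ‖b' - a'‖) := by
          have hα0 : 0 ≤ α := (norm_nonneg _).trans hα
          have hδ0 : 0 ≤ δ := (norm_nonneg _).trans hδ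
          gcongr
  rw [le_div_iff₀ (by linarith)]
  linear_combination hrec

theorem Matrix.isUnit_transpose_mul_self {m n R : Type*} [Fintype m] [Fintype n]
    [DecidableEq n] [Field R] [LinearOrder R] [IsStrictOrderedRing R] {A : Matrix m n R}
    (hA : Function.Injective A.mulVec) : IsUnit (Aᵀ * A) := by
  rw [← mulVec_injective_iff_isUnit]
  have hker := ker_mulVecLin_transpose_mul_self A
  rwa [(LinearMap.ker_eq_bot (f := A.mulVecLin)).mpr hA, LinearMap.ker_eq_bot] at hker

theorem Matrix.inv_transpose_mul_self_eq {m n α : Type*} [Fintype m] [Fintype n] [DecidableEq n]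
    [CommRing α] (A : Matrix m n α) :
    (Aᵀ * A)⁻¹ = (Aᵀ * A)⁻¹ * Aᵀ * ((Aᵀ * A)⁻¹ * Aᵀ)ᵀ := by
  rw [transpose_mul, transpose_transpose, transpose_nonsing_inv, transpose_mul,
    transpose_transpose, Matrix.mul_assoc, ← Matrix.mul_assoc Aᵀ, ← Matrix.mul_assoc]
  rcases nonsing_inv_cancel_or_zero (Aᵀ * A) with ⟨h, -⟩ | h <;> simp [h]

section L2

variable {m n : Type*} [Fintype m] [Fintype n] [DecidableEq m] [DecidableEq n]

theorem Matrix.l2_opNorm_transpose (A : Matrix m n ℝ) : ‖Aᵀ‖ = ‖A‖ :=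
  l2_opNorm_conjTranspose A

theorem Matrix.l2_opNorm_inv_transpose_mul_self (A : Matrix m n ℝ) :
    ‖(Aᵀ * A)⁻¹‖ = ‖(Aᵀ * A)⁻¹ * Aᵀ‖ ^ 2 := by
  conv_lhs => rw [inv_transpose_mul_self_eq]
  rw [sq, ← l2_opNorm_transpose ((Aᵀ * A)⁻¹ * Aᵀ)]
  simpa only [conjTranspose_eq_transpose_of_trivial, transpose_transpose] using
    l2_opNorm_conjTranspose_mul_self ((Aᵀ * A)⁻¹ * Aᵀ)ᵀ

theorem Matrix.l2_opNorm_transpose_mul_self_add_sub_le (A E : Matrix m n ℝ) :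
    ‖(A + E)ᵀ * (A + E) - Aᵀ * A‖ ≤ 2 * ‖E‖ * ‖A‖ + ‖E‖ ^ 2 := by
  have hexp : (A + E)ᵀ * (A + E) - Aᵀ * A = Eᵀ * A + Aᵀ * E + Eᵀ * E := by
    rw [transpose_add, Matrix.add_mul, Matrix.mul_add, Matrix.mul_add]; abel
  rw [hexp]
  calc ‖Eᵀ * A + Aᵀ * E + Eᵀ * E‖
        ≤ ‖Eᵀ * A‖ + ‖Aᵀ * E‖ + ‖Eᵀ * E‖ := norm_add₃_le
    _ ≤ ‖Eᵀ‖ * ‖A‖ + ‖Aᵀ‖ * ‖E‖ + ‖Eᵀ‖ * ‖E‖ := by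
        gcongr <;> exact l2_opNorm_mul _ _
    _ = 2 * ‖E‖ * ‖A‖ + ‖E‖ ^ 2 := by
        rw [l2_opNorm_transpose, l2_opNorm_transpose]; ring

end L2

theorem pinv_perturbation_norm_bound_general (M K : ℕ)
    (Φ E : Matrix (Fin M) (Fin K) ℝ)
    (hrank : Function.Injective Φ.mulVec)
    (hrank' : Function.Injective (Φ + E).mulVec)
    (pinv : Matrix (Fin K) (Fin M) ℝ) (hpinv : pinv = (Φᵀ * Φ)⁻¹ * Φᵀ)
    (D : ℝ) (hD : D = 2 * ‖E‖ * ‖Φ‖ + ‖E‖ ^ 2) (hDsmall : D * ‖pinv‖ ^ 2 < 1)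
    (F : Matrix (Fin M) (Fin K) ℝ)
    (hF : Fᵀ = ((Φ + E)ᵀ * (Φ + E))⁻¹ * (Φ + E)ᵀ - pinv) :
    ‖F‖ ≤ ‖E‖ * ‖pinv‖ ^ 2 +
      D * ‖pinv‖ ^ 4 / (1 - D * ‖pinv‖ ^ 2) * (‖Φ‖ + ‖E‖) := by
  set A := Φᵀ * Φ
  set B := (Φ + E)ᵀ * (Φ + E)
  have hA : ‖A⁻¹‖ = ‖pinv‖ ^ 2 := hpinv ▸ l2_opNorm_inv_transpose_mul_self Φ
  have hS : ‖B⁻¹ - A⁻¹‖ ≤ D * ‖pinv‖ ^ 4 / (1 - D * ‖pinv‖ ^ 2) := by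
    have hB : ‖B - A‖ ≤ D := hD ▸ l2_opNorm_transpose_mul_self_add_sub_le Φ E
    have := norm_inv_sub_inv_le_of_mul_eq_one
      (nonsing_inv_mul A ((isUnit_iff_isUnit_det A).mp (isUnit_transpose_mul_self hrank)))
      (mul_nonsing_inv B ((isUnit_iff_isUnit_det B).mp (isUnit_transpose_mul_self hrank')))
      hA.le hB (by linarith)
    convert this using 2 <;> ring
  have hFt : Fᵀ = A⁻¹ * Eᵀ + (B⁻¹ - A⁻¹) * (Φ + E)ᵀ := by
    rw [hF, hpinv, Matrix.sub_mul, transpose_add, Matrix.mul_add, Matrix.mul_add]; abel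
  calc ‖F‖ = ‖A⁻¹ * Eᵀ + (B⁻¹ - A⁻¹) * (Φ + E)ᵀ‖ := by
        rw [← l2_opNorm_transpose F, hFt]
    _ ≤ ‖A⁻¹‖ * ‖Eᵀ‖ + ‖B⁻¹ - A⁻¹‖ * ‖(Φ + E)ᵀ‖ :=
        (norm_add_le _ _).trans (add_le_add (l2_opNorm_mul _ _) (l2_opNorm_mul _ _))
    _ ≤ ‖pinv‖ ^ 2 * ‖E‖ +
          D * ‖pinv‖ ^ 4 / (1 - D * ‖pinv‖ ^ 2) * (‖Φ‖ + ‖E‖) := by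
        rw [hA, l2_opNorm_transpose, l2_opNorm_transpose]
        exact add_le_add_right
          (mul_le_mul hS (norm_add_le Φ E) (norm_nonneg _) ((norm_nonneg _).trans hS)) _
    _ = _ := by ring

/-- Spectral-norm bound on the perturbation `F` of the pseudoinverse:
`‖F‖₂ ≤ ‖E‖₂‖Φ†‖₂² + (D‖Φ†‖₂⁴/(1 − D‖Φ†‖₂²))·(‖Φ‖₂ + ‖E‖₂)`,
where `D = 2‖E‖₂‖Φ‖₂ + ‖E‖₂²`. -/
theorem pinv_perturbation_norm_bound (M K : ℕ)
    (Φ E : Matrix (Fin M) (Fin K) ℝ)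
    (hrank : Function.Injective Φ.mulVec)
    (hrank' : Function.Injective (Φ + E).mulVec)
    (pinv : Matrix (Fin K) (Fin M) ℝ) (hpinv : pinv = (Φᵀ * Φ)⁻¹ * Φᵀ)
    (Δ : Matrix (Fin K) (Fin K) ℝ) (hΔ : Δ = Eᵀ * Φ + Φᵀ * E + Eᵀ * E)
    (hsmall : ‖pinvᵀ * Δ * pinv‖ < 1)
    (D : ℝ) (hD : D = 2 * ‖E‖ * ‖Φ‖ + ‖E‖ ^ 2) (hDsmall : D * ‖pinv‖ ^ 2 < 1)
    (F : Matrix (Fin M) (Fin K) ℝ)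
    (hF : Fᵀ = ((Φ + E)ᵀ * (Φ + E))⁻¹ * (Φ + E)ᵀ - pinv) :
    ‖F‖ ≤ ‖E‖ * ‖pinv‖ ^ 2 +
      D * ‖pinv‖ ^ 4 / (1 - D * ‖pinv‖ ^ 2) * (‖Φ‖ + ‖E‖) :=
  pinv_perturbation_norm_bound_general M K Φ E hrank hrank' pinv hpinv D hD hDsmall F hF
end

section
/- Let x = Σ_{k=1}^K a_k δ_{t_k} with a_k > 0 be a nonnegative discrete measure on [0,1] and y_j = Σ_k a_k φ(t_k − s_j). If there exists λ* ∈ ℝ^M such that q(s) = Σ_j λ*_j φ(s − s_j) satisfies q(t_k) = 1 for all k and q(s) < 1 for all s ∉ {t₁,…,t_K}, and the matrix (φ(t_k − s_j))_{j,k} has rank K, then x is the unique minimizer of the total mass ∫ dx̂ among nonnegative measures x̂ on [0,1] satisfying ∫ φ(· − s_j) dx̂ = y_j for all j. -/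
/-!
The dual certificate `q = Σ_j λ*_j φ(· - s_j)` is at most `1` on `[0,1]`, and since `μ` and
`x = Σ_k a_k δ_{t_k}` have the same measurements, `∫ q dμ = Σ_j λ*_j y_j = Σ_k a_k q(t_k) = Σ_k a_k`,
the mass of `x`. Hence `x` has mass at most that of `μ`; if the masses agree then `q = 1` `μ`-a.e.,
so `μ` is carried by `{t_k}`, i.e. `μ = Σ_k b_k δ_{t_k}` (the `t_k` are distinct because
the columns of `A` below are). The measurements then read `A b = A a`
for the matrix `A = (φ(t_k - s_j))`, whose full column rank forces `b = a`.
-/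

open MeasureTheory Function Set

theorem Continuous.integrable_of_ae_mem_compact {X E : Type*} [TopologicalSpace X] [T2Space X]
    [MeasurableSpace X] [OpensMeasurableSpace X] [NormedAddCommGroup E] {μ : Measure X}
    [IsFiniteMeasureOnCompacts μ] {K : Set X} {f : X → E} (hf : Continuous f) (hK : IsCompact K)
    (hμK : ∀ᵐ x ∂μ, x ∈ K) : Integrable f μ := by
  rw [← Measure.restrict_eq_self_of_ae_mem hμK]
  exact hf.continuousOn.integrableOn_compact hK

namespace MeasureTheory.Measure

variable {α ι : Type*} [MeasurableSpace α] [Fintype ι]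

theorem eq_sum_smul_dirac_of_ae_mem_range [MeasurableSingletonClass α] {μ : Measure α}
    {t : ι → α} (ht : Injective t) (hμ : ∀ᵐ x ∂μ, x ∈ range t) :
    μ = ∑ i, μ {t i} • dirac (t i) := by
  have hdisj : Pairwise (Disjoint on fun i => ({t i} : Set α)) :=
    fun i j hij => disjoint_singleton.mpr (ht.ne hij)
  calc μ = μ.restrict (⋃ i, {t i}) := by
        rw [← range_eq_iUnion, restrict_eq_self_of_ae_mem hμ]
    _ = ∑ i, μ {t i} • dirac (t i) := by
        simp only [restrict_iUnion hdisj fun _ => measurableSet_singleton _, sum_fintype,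
          restrict_singleton]

theorem integral_sum_smul_dirac {E : Type*} [NormedAddCommGroup E] [NormedSpace ℝ E]
    [CompleteSpace E] [MeasurableSingletonClass α] (f : α → E) {c : ι → ENNReal}
    (hc : ∀ i, c i ≠ ⊤) (t : ι → α) :
    ∫ x, f x ∂(∑ i, c i • dirac (t i)) = ∑ i, (c i).toReal • f (t i) := by
  rw [integral_finsetSum_measure fun i _ => (integrable_dirac enorm_lt_top).smul_measure (hc i)]
  simp only [integral_smul_measure, integral_dirac]

end MeasureTheory.Measure

theorem Matrix.mulVec_injective_of_rank_eq_card {m n R : Type*} [Fintype m] [Fintype n] [Field R]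
    {A : Matrix m n R} (hA : A.rank = Fintype.card n) : Injective A.mulVec := by
  have h := A.mulVecLin.finrank_range_add_finrank_ker
  rw [← Matrix.rank, hA, Module.finrank_fintype_fun_eq_card, add_eq_left,
    Submodule.finrank_eq_zero, LinearMap.ker_eq_bot] at h
  exact h

theorem Matrix.col_injective_of_mulVec_injective {m n R : Type*} [Fintype n] [DecidableEq n]
    [NonAssocSemiring R] [Nontrivial R] {A : Matrix m n R} (hA : Injective A.mulVec) :
    Injective A.col := fun i j hij => by
  rw [← Matrix.mulVec_single_one, ← Matrix.mulVec_single_one] at hij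
  by_contra hne
  simpa [Pi.single_eq_of_ne hne] using congrFun (hA hij) i

section Certificate

variable {α : Type*} [MeasurableSpace α] {μ : Measure α}

theorem integral_certificate_eq_sum {ι κ : Type*} [Fintype ι] [Fintype κ] {f : ι → α → ℝ}
    (hf : ∀ j, Integrable (f j) μ) {lam : ι → ℝ} {a : κ → ℝ} {t : κ → α}
    (hmeas : ∀ j, ∫ u, f j u ∂μ = ∑ k, a k * f j (t k))
    (hcert : ∀ k, ∑ j, lam j * f j (t k) = 1) :
    ∫ u, ∑ j, lam j * f j u ∂μ = ∑ k, a k := calc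
  ∫ u, ∑ j, lam j * f j u ∂μ = ∑ j, lam j * ∑ k, a k * f j (t k) := by
    rw [integral_finsetSum _ fun j _ => (hf j).const_mul _]
    simp only [integral_const_mul, hmeas]
  _ = ∑ k, a k * ∑ j, lam j * f j (t k) := by
    simp only [Finset.mul_sum]
    rw [Finset.sum_comm]
    simp only [mul_left_comm]
  _ = ∑ k, a k := by simp only [hcert, mul_one]

theorem ae_mem_of_integral_eq_measureReal_univ [IsFiniteMeasure μ] {q : α → ℝ} {S : Set α}
    (hq : Integrable q μ) (hle : ∀ᵐ u ∂μ, q u ≤ 1) (hlt : ∀ᵐ u ∂μ, u ∉ S → q u < 1)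
    (h : ∫ u, q u ∂μ = μ.real univ) : ∀ᵐ u ∂μ, u ∈ S := by
  have hq_one : q =ᵐ[μ] 1 :=
    (integral_eq_iff_of_ae_le hq (integrable_const 1) hle).mp (by simpa using h)
  filter_upwards [hlt, hq_one] with u hu hqu
  by_contra hS
  exact (hu hS).ne hqu

end Certificate

theorem exact_recovery_general (φ : ℝ → ℝ) (hφ : Continuous φ)
    (M K : ℕ) (s : Fin M → ℝ)
    (t : Fin K → ℝ)
    (a : Fin K → ℝ) (ha : ∀ k, 0 < a k)
    (y : Fin M → ℝ) (hy : ∀ j, y j = ∑ k : Fin K, a k * φ (t k - s j))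
    (lamstar : Fin M → ℝ)
    (hq1 : ∀ k : Fin K, ∑ j : Fin M, lamstar j * φ (t k - s j) = 1)
    (hq2 : ∀ x : ℝ, x ∈ Set.Icc (0 : ℝ) 1 → x ∉ Set.range t →
      ∑ j : Fin M, lamstar j * φ (x - s j) < 1)
    (hrank : (Matrix.of fun (j : Fin M) (k : Fin K) => φ (t k - s j)).rank = K) :
    ∀ μ : Measure ℝ, IsFiniteMeasure μ → μ (Set.Icc (0 : ℝ) 1)ᶜ = 0 →
      (∀ j : Fin M, ∫ u, φ (u - s j) ∂μ = y j) →
      ((∑ k : Fin K, ENNReal.ofReal (a k) • Measure.dirac (t k)) Set.univ ≤ μ Set.univ ∧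
        (μ Set.univ = (∑ k : Fin K, ENNReal.ofReal (a k) • Measure.dirac (t k)) Set.univ →
          μ = ∑ k : Fin K, ENNReal.ofReal (a k) • Measure.dirac (t k))) := by
  intro μ _ hμ hmeas
  set q : ℝ → ℝ := fun u => ∑ j, lamstar j * φ (u - s j)
  have hμI : ∀ᵐ u ∂μ, u ∈ Icc (0 : ℝ) 1 := mem_ae_iff.mpr hμ
  have hφint (j : Fin M) : Integrable (fun u => φ (u - s j)) μ :=
    (hφ.comp (continuous_sub_right (s j))).integrable_of_ae_mem_compact isCompact_Icc hμI
  have hqint : Integrable q μ := integrable_finsetSum _ fun j _ => (hφint j).const_mul _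
  have hq_le : ∀ᵐ u ∂μ, q u ≤ 1 := by
    filter_upwards [hμI] with u hu
    by_cases h : u ∈ range t
    · obtain ⟨k, rfl⟩ := h
      exact (hq1 k).le
    · exact (hq2 u hu h).le
  have hq_integral : ∫ u, q u ∂μ = ∑ k, a k := integral_certificate_eq_sum
    (f := fun j u => φ (u - s j)) hφint (fun j => (hmeas j).trans (hy j)) hq1
  have hx_univ : (∑ k, ENNReal.ofReal (a k) • Measure.dirac (t k)) univ
      = ENNReal.ofReal (∑ k, a k) := by
    simp [ENNReal.ofReal_sum_of_nonneg fun k _ => (ha k).le]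
  have hmass : ∑ k, a k ≤ μ.real univ := by
    simpa [hq_integral] using integral_mono_ae hqint (integrable_const 1) hq_le
  refine ⟨hx_univ ▸ ENNReal.ofReal_le_of_le_toReal hmass, fun heq => ?_⟩
  have hμt : ∀ᵐ u ∂μ, u ∈ range t := by
    refine ae_mem_of_integral_eq_measureReal_univ hqint hq_le
      (by filter_upwards [hμI] with u hu using hq2 u hu) ?_
    simp [hq_integral, measureReal_def, heq, hx_univ,
      ENNReal.toReal_ofReal (Finset.sum_nonneg fun k _ => (ha k).le)]
  have hinj := Matrix.mulVec_injective_of_rank_eq_card (hrank.trans (Fintype.card_fin K).symm)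
  have htinj : Injective t := fun k k' h =>
    Matrix.col_injective_of_mulVec_injective hinj (by ext j; simp [h])
  have hdec := Measure.eq_sum_smul_dirac_of_ae_mem_range htinj hμt
  have hcoeff : (fun k => (μ {t k}).toReal) = a := by
    apply hinj
    ext j
    have := hmeas j
    rw [hdec, Measure.integral_sum_smul_dirac _ (fun k => measure_ne_top μ _), hy] at this
    simpa [Matrix.mulVec, dotProduct, mul_comm] using this
  rw [hdec]
  simp_rw [← hcoeff, ENNReal.ofReal_toReal (measure_ne_top μ _)]

/-- Exact recovery for nonnegative super-resolution: if a dual certificate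
`q(s) = Σ_j λ*_j φ(s − s_j)` exists with `q(t_k) = 1` and `q < 1` off the support,
and the matrix `(φ(t_k − s_j))` has rank `K`, then the discrete measure
`x = Σ_k a_k δ_{t_k}` is the unique minimizer of total mass among nonnegative
measures on `[0,1]` matching the measurements. -/
theorem exact_recovery (φ : ℝ → ℝ) (hφ : Continuous φ)
    (M K : ℕ) (s : Fin M → ℝ) (hs : ∀ j, s j ∈ Set.Icc (0 : ℝ) 1)
    (t : Fin K → ℝ) (ht : ∀ k, t k ∈ Set.Icc (0 : ℝ) 1)
    (a : Fin K → ℝ) (ha : ∀ k, 0 < a k)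
    (y : Fin M → ℝ) (hy : ∀ j, y j = ∑ k : Fin K, a k * φ (t k - s j))
    (lamstar : Fin M → ℝ)
    (hq1 : ∀ k : Fin K, ∑ j : Fin M, lamstar j * φ (t k - s j) = 1)
    (hq2 : ∀ x : ℝ, x ∈ Set.Icc (0 : ℝ) 1 → x ∉ Set.range t →
      ∑ j : Fin M, lamstar j * φ (x - s j) < 1)
    (hrank : (Matrix.of fun (j : Fin M) (k : Fin K) => φ (t k - s j)).rank = K) :
    ∀ μ : Measure ℝ, IsFiniteMeasure μ → μ (Set.Icc (0 : ℝ) 1)ᶜ = 0 →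
      (∀ j : Fin M, ∫ u, φ (u - s j) ∂μ = y j) →
      ((∑ k : Fin K, ENNReal.ofReal (a k) • Measure.dirac (t k)) Set.univ ≤ μ Set.univ ∧
        (μ Set.univ = (∑ k : Fin K, ENNReal.ofReal (a k) • Measure.dirac (t k)) Set.univ →
          μ = ∑ k : Fin K, ENNReal.ofReal (a k) • Measure.dirac (t k))) :=
  exact_recovery_general φ hφ M K s t a ha y hy lamstar hq1 hq2 hrank
end
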